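/- Let f : ℕ → ℕ be an injective computable function whose range is not computable, and let G be the group with presentation ⟨ a_i, b_i, c_i (i ∈ ℕ) | c_{f(i)} = a_{f(i)}^i b_{f(i)}^i (i ∈ ℕ) ⟩. Then PP[2] is undecidable for G: the set of triples of words (u, v, w) such that the equation ⟦u⟧ = ⟦v⟧^x ⟦w⟧^y has a solution (x,y) ∈ ℤ² in G is not computable. -/

import Mathlib

/-- The relators `c_{f(i)}⁻¹ a_{f(i)}^i b_{f(i)}^i` (`i ∈ ℕ`) of the presentation
`⟨ aᵢ, bᵢ, cᵢ (i ∈ ℕ) | c_{f(i)} = a_{f(i)}^i b_{f(i)}^i (i ∈ ℕ) ⟩`.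
The generator `a_j` is `(j, 0)`, `b_j` is `(j, 1)` and `c_j` is `(j, 2)`. -/
def abcRels (f : ℕ → ℕ) : Set (FreeGroup (ℕ × Fin 3)) :=
  Set.range fun i =>
    (FreeGroup.of (f i, (2 : Fin 3)))⁻¹ *
      FreeGroup.of (f i, (0 : Fin 3)) ^ i * FreeGroup.of (f i, (1 : Fin 3)) ^ i

/-- The group `⟨ aᵢ, bᵢ, cᵢ (i ∈ ℕ) | c_{f(i)} = a_{f(i)}^i b_{f(i)}^i (i ∈ ℕ) ⟩`. -/
abbrev ABCGroup (f : ℕ → ℕ) := PresentedGroup (abcRels f)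

/-- The image of the generator `(j, t)` in `ABCGroup f` (`t = 0, 1, 2` for `a_j, b_j, c_j`). -/
def abcGen (f : ℕ → ℕ) (x : ℕ × Fin 3) : ABCGroup f := PresentedGroup.of x

/-- The element of `ABCGroup f` represented by a word over the generators. -/
def abcEval (f : ℕ → ℕ) (w : List ((ℕ × Fin 3) × Bool)) : ABCGroup f :=
  PresentedGroup.mk (abcRels f) (FreeGroup.mk w)

/-!
`n ∈ range f` reduces to PP[2] via `n ↦ (c_n, a_n, b_n)`. If `n = f i`, then `c_n = a_n^i b_n^i`.
If `n ∉ range f`, no relator involves `c_n`, so the exponent sum of `c_n` is a homomorphism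
`G → ℤ` sending `c_n` to `1` and `a_n`, `b_n` to `0`, and `c_n ∉ ⟨a_n⟩⟨b_n⟩`.
-/

def FreeGroup.exponentSum {α : Type*} [DecidableEq α] (x : α) : FreeGroup α →* Multiplicative ℤ :=
  FreeGroup.lift (Pi.mulSingle x (Multiplicative.ofAdd 1))

namespace PresentedGroup

variable {α : Type*} [DecidableEq α] {rels : Set (FreeGroup α)}

theorem of_ne_zpow_mul_zpow {x y z : α} (hy : y ≠ x) (hz : z ≠ x)
    (hrels : ∀ r ∈ rels, FreeGroup.exponentSum x r = 1) (m k : ℤ) :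
    (of x : PresentedGroup rels) ≠ of y ^ m * of z ^ k := by
  intro h
  have hsingle (w : α) : toGroup hrels (of w) =
      (Pi.mulSingle x (Multiplicative.ofAdd 1) : α → Multiplicative ℤ) w :=
    toGroup.of hrels
  have h' := congrArg (toGroup hrels) h
  rw [map_mul, map_zpow, map_zpow, hsingle, hsingle, hsingle, Pi.mulSingle_eq_same,
    Pi.mulSingle_eq_of_ne hy, Pi.mulSingle_eq_of_ne hz, one_zpow, one_zpow, mul_one] at h'
  exact one_ne_zero (ofAdd_eq_one.mp h')

end PresentedGroup

theorem abcEval_singleton (f : ℕ → ℕ) (x : ℕ × Fin 3) :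
    abcEval f [(x, true)] = abcGen f x :=
  rfl

theorem abcGen_two_eq (f : ℕ → ℕ) (i : ℕ) :
    abcGen f (f i, 2) = abcGen f (f i, 0) ^ i * abcGen f (f i, 1) ^ i := by
  have h := PresentedGroup.one_of_mem (rels := abcRels f) ⟨i, rfl⟩
  rw [map_mul, map_mul, map_inv, map_pow, map_pow, mul_assoc] at h
  exact inv_mul_eq_one.mp h

theorem exponentSum_abcRels {f : ℕ → ℕ} {n : ℕ} (hn : n ∉ Set.range f) :
    ∀ r ∈ abcRels f, FreeGroup.exponentSum (n, 2) r = 1 := by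
  rintro r ⟨i, rfl⟩
  have hne (t : Fin 3) : (f i, t) ≠ (n, 2) := fun h => hn ⟨i, (Prod.ext_iff.mp h).1⟩
  simp [FreeGroup.exponentSum, Pi.mulSingle_eq_of_ne (hne _)]

def abcPP2 (f : ℕ → ℕ)
    (t : List ((ℕ × Fin 3) × Bool) × List ((ℕ × Fin 3) × Bool) × List ((ℕ × Fin 3) × Bool)) :
    Prop :=
  ∃ x y : ℤ, abcEval f t.1 = abcEval f t.2.1 ^ x * abcEval f t.2.2 ^ y

def cabWords (n : ℕ) :
    List ((ℕ × Fin 3) × Bool) × List ((ℕ × Fin 3) × Bool) × List ((ℕ × Fin 3) × Bool) :=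
  ([((n, 2), true)], [((n, 0), true)], [((n, 1), true)])

theorem primrec_cabWords : Primrec cabWords := by
  have single (t : Fin 3) : Primrec fun n : ℕ => [((n, t), true)] :=
    Primrec.list_cons.comp ((Primrec.id.pair (Primrec.const t)).pair (Primrec.const true))
      (Primrec.const [])
  exact (single 2).pair ((single 0).pair (single 1))

theorem abcPP2_cabWords_iff (f : ℕ → ℕ) (n : ℕ) : abcPP2 f (cabWords n) ↔ n ∈ Set.range f := by
  simp only [abcPP2, cabWords, abcEval_singleton]
  refine ⟨fun ⟨x, y, h⟩ => ?_, fun ⟨i, hi⟩ => ⟨i, i, ?_⟩⟩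
  · by_contra hn
    exact PresentedGroup.of_ne_zpow_mul_zpow (by simp) (by simp) (exponentSum_abcRels hn) x y h
  · simpa only [← hi, zpow_natCast] using abcGen_two_eq f i

theorem mem_range_manyOneReducible_abcPP2 (f : ℕ → ℕ) :
    (· ∈ Set.range f) ≤₀ abcPP2 f :=
  ⟨cabWords, primrec_cabWords.to_comp, fun n => (abcPP2_cabWords_iff f n).symm⟩

theorem abcGroup_PP2_undecidable_general (f : ℕ → ℕ)
    (hrange : ¬ ComputablePred fun n : ℕ => n ∈ Set.range f) :
    ¬ ComputablePred
        fun t : List ((ℕ × Fin 3) × Bool) × List ((ℕ × Fin 3) × Bool) × List ((ℕ × Fin 3) × Bool) =>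
          ∃ x y : ℤ, abcEval f t.1 = abcEval f t.2.1 ^ x * abcEval f t.2.2 ^ y :=
  fun hPP2 => hrange
    (ComputablePred.computable_of_manyOneReducible (mem_range_manyOneReducible_abcPP2 f) hPP2)

/-- For an injective computable `f : ℕ → ℕ` with non-computable range, the problem
PP[2] for the group `⟨ aᵢ, bᵢ, cᵢ (i ∈ ℕ) | c_{f(i)} = a_{f(i)}^i b_{f(i)}^i (i ∈ ℕ) ⟩`
is undecidable: the set of triples of words `(u, v, w)` such that
`⟦u⟧ = ⟦v⟧^x ⟦w⟧^y` has an integer solution `(x, y)` is not computable. -/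
theorem abcGroup_PP2_undecidable (f : ℕ → ℕ) (hf : Function.Injective f)
    (hcf : Computable f) (hrange : ¬ ComputablePred fun n : ℕ => n ∈ Set.range f) :
    ¬ ComputablePred
        fun t : List ((ℕ × Fin 3) × Bool) × List ((ℕ × Fin 3) × Bool) × List ((ℕ × Fin 3) × Bool) =>
          ∃ x y : ℤ, abcEval f t.1 = abcEval f t.2.1 ^ x * abcEval f t.2.2 ^ y :=
  abcGroup_PP2_undecidable_general f hrange
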